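/- If A = (1, a_1, …, a_k) is an orderly currency and m ≥ 2 is an integer, then the extended currency (1, a_1, …, a_k, m·a_k) is also orderly. -/

import Mathlib

/-- The largest coin of the currency with coins `a 0, …, a k` that is `≤ c`
(or `0` if there is none). -/
def bestCoin (a : ℕ → ℕ) (k : ℕ) (c : ℕ) : ℕ :=
  ((Finset.range (k + 1)).filter fun j => a j ≤ c).sup a

/-- The number of coins used by the greedy algorithm to pay the amount `c`,
using the currency with coins `a 0, …, a k`. -/
def grd (a : ℕ → ℕ) (k : ℕ) : ℕ → ℕ
  | 0 => 0
  | c + 1 =>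
    if h : 1 ≤ bestCoin a k (c + 1) then
      grd a k (c + 1 - bestCoin a k (c + 1)) + 1
    else 0
  decreasing_by omega

/-- The minimal number of coins needed to pay the amount `c`,
using the currency with coins `a 0, …, a k`. -/
noncomputable def opt (a : ℕ → ℕ) (k : ℕ) (c : ℕ) : ℕ :=
  sInf {n | ∃ x : Fin (k + 1) → ℕ, (∑ i, x i) = n ∧ (∑ i, x i * a i.1) = c}

/-- `a 0, …, a k` is a currency: it starts with the coin `1` and is strictly increasing. -/
def IsCurrency (a : ℕ → ℕ) (k : ℕ) : Prop :=
  a 0 = 1 ∧ ∀ i j : ℕ, i < j → j ≤ k → a i < a j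

/-- The currency with coins `a 0, …, a k` is orderly: the greedy payment is
optimal for every positive amount. -/
def Orderly (a : ℕ → ℕ) (k : ℕ) : Prop :=
  ∀ c : ℕ, 0 < c → opt a k c = grd a k c

/-- The set `𝒜(a) = ⋃_{m ≥ 1} {m·a − l : 0 ≤ l ≤ m}`. -/
def calA (a : ℕ) : Set ℕ :=
  {x | ∃ m l : ℕ, 1 ≤ m ∧ l ≤ m ∧ x = m * a - l}

/-!
Write `B = m * a k` for the new coin. Below `B` neither the greedy algorithm nor an optimal
payment can use it, so both agree with those of `a`. For `c ≥ B` greedy takes one `B`, while an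
optimal payment either avoids `B`, costing `opt a c = grd a c = grd a (c - B) + m`, or uses it,
costing `opt' (c - B) + 1`. By induction `opt' (c - B) = grd' (c - B) ≤ grd a (c - B)`, and
`m ≥ 1`, so the second option is the minimum and equals `grd' c`.
-/

def extendCoin (a : ℕ → ℕ) (k B : ℕ) : ℕ → ℕ := fun i => if i ≤ k then a i else B

lemma grd_zero (a : ℕ → ℕ) (k : ℕ) : grd a k 0 = 0 := by
  rw [grd]

lemma bestCoin_le (a : ℕ → ℕ) (k c : ℕ) : bestCoin a k c ≤ c :=
  Finset.sup_le fun _ hj => (Finset.mem_filter.mp hj).2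

lemma one_le_bestCoin {a : ℕ → ℕ} {k c : ℕ} (h0 : a 0 = 1) (hc : 0 < c) :
    1 ≤ bestCoin a k c :=
  h0 ▸ Finset.le_sup (Finset.mem_filter.mpr ⟨Finset.mem_range.mpr k.succ_pos, h0 ▸ hc⟩)

lemma bestCoin_eq_of_le {a : ℕ → ℕ} {k c : ℕ} (hle : ∀ i ≤ k, a i ≤ a k) (hc : a k ≤ c) :
    bestCoin a k c = a k := by
  refine le_antisymm (Finset.sup_le fun j hj => hle j ?_) ?_
  · simpa [Nat.lt_succ_iff] using (Finset.mem_filter.mp hj).1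
  · exact Finset.le_sup (Finset.mem_filter.mpr ⟨Finset.mem_range.mpr k.lt_succ_self, hc⟩)

lemma grd_eq_grd_sub_bestCoin_add_one {a : ℕ → ℕ} {k c : ℕ} (h : 1 ≤ bestCoin a k c) :
    grd a k c = grd a k (c - bestCoin a k c) + 1 := by
  cases c with
  | zero => exact absurd (bestCoin_le a k 0) (by omega)
  | succ c => rw [grd, dif_pos h]

lemma grd_eq_grd_sub_mul_add {a : ℕ → ℕ} {k : ℕ} (hle : ∀ i ≤ k, a i ≤ a k) (hk : 1 ≤ a k)
    (t : ℕ) {c : ℕ} (hc : t * a k ≤ c) : grd a k c = grd a k (c - t * a k) + t := by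
  induction t generalizing c with
  | zero => simp
  | succ t ih =>
    have hbest := bestCoin_eq_of_le hle (c := c) (by nlinarith)
    rw [grd_eq_grd_sub_bestCoin_add_one (hbest ▸ hk), hbest, ih (by rw [add_mul] at hc; omega)]
    rw [Nat.sub_sub, add_mul, one_mul, add_comm (a k), add_assoc]

lemma opt_le_of_sum {a : ℕ → ℕ} {k c : ℕ} (x : Fin (k + 1) → ℕ) (hx : ∑ i, x i * a i = c) :
    opt a k c ≤ ∑ i, x i :=
  Nat.sInf_le ⟨x, rfl, hx⟩

lemma exists_sum_eq_opt {a : ℕ → ℕ} {k : ℕ} (h0 : a 0 = 1) (c : ℕ) :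
    ∃ x : Fin (k + 1) → ℕ, ∑ i, x i = opt a k c ∧ ∑ i, x i * a i = c := by
  have hrep : ∑ i : Fin (k + 1), (Pi.single 0 c : Fin (k + 1) → ℕ) i * a i = c := by
    simp [Pi.single_apply, h0]
  exact Nat.sInf_mem (s := {n | ∃ x : Fin (k + 1) → ℕ, ∑ i, x i = n ∧ ∑ i, x i * a i = c})
    ⟨_, _, rfl, hrep⟩

lemma opt_zero (a : ℕ → ℕ) (k : ℕ) : opt a k 0 = 0 :=
  Nat.le_zero.mp (opt_le_of_sum 0 (by simp) |>.trans_eq (by simp))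

lemma IsCurrency.le_of_le {a : ℕ → ℕ} {k i j : ℕ} (h : IsCurrency a k) (hij : i ≤ j)
    (hj : j ≤ k) : a i ≤ a j :=
  hij.lt_or_eq.elim (fun hlt => (h.2 i j hlt hj).le) (fun heq => heq ▸ le_rfl)

theorem Orderly.opt_eq_grd {a : ℕ → ℕ} {k : ℕ} (h : Orderly a k) (c : ℕ) :
    opt a k c = grd a k c := by
  rcases Nat.eq_zero_or_pos c with rfl | hc
  · rw [opt_zero, grd_zero]
  · exact h c hc

section extendCoin

variable {a : ℕ → ℕ} {k B : ℕ}

lemma extendCoin_of_le {i : ℕ} (hi : i ≤ k) : extendCoin a k B i = a i := if_pos hi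

lemma extendCoin_add_one : extendCoin a k B (k + 1) = B := if_neg (by omega)

lemma sum_mul_extendCoin (x : Fin (k + 2) → ℕ) :
    ∑ i, x i * extendCoin a k B i = ∑ i : Fin (k + 1), Fin.init x i * a i + x (Fin.last _) * B := by
  rw [Fin.sum_univ_castSucc, Fin.val_last, extendCoin_add_one]
  congr 1
  exact Finset.sum_congr rfl fun i _ => by rw [Fin.val_castSucc, extendCoin_of_le i.is_le]; rfl

lemma opt_extendCoin_le_of_sum (u : Fin (k + 1) → ℕ) (t : ℕ) {c : ℕ}
    (hu : ∑ i, u i * a i + t * B = c) : opt (extendCoin a k B) (k + 1) c ≤ ∑ i, u i + t := by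
  refine (opt_le_of_sum (Fin.snoc u t) ?_).trans_eq ?_
  · rw [sum_mul_extendCoin, Fin.init_snoc, Fin.snoc_last, hu]
  · rw [Fin.sum_univ_castSucc, Fin.snoc_last]
    simp only [Fin.snoc_castSucc]

lemma exists_opt_extendCoin (h0 : a 0 = 1) (c : ℕ) :
    ∃ (u : Fin (k + 1) → ℕ) (t : ℕ), ∑ i, u i + t = opt (extendCoin a k B) (k + 1) c ∧
      ∑ i, u i * a i + t * B = c := by
  obtain ⟨x, hcount, hsum⟩ := exists_sum_eq_opt (a := extendCoin a k B) (k := k + 1)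
    (by rw [extendCoin_of_le k.zero_le, h0]) c
  refine ⟨Fin.init x, x (Fin.last _), ?_, by rw [← sum_mul_extendCoin, hsum]⟩
  rw [← hcount]
  exact (Fin.sum_univ_castSucc x).symm

lemma opt_extendCoin_le (h0 : a 0 = 1) (c : ℕ) :
    opt (extendCoin a k B) (k + 1) c ≤ opt a k c := by
  obtain ⟨u, hcount, hsum⟩ := exists_sum_eq_opt (k := k) h0 c
  simpa [hcount] using opt_extendCoin_le_of_sum (B := B) u 0 (by simpa using hsum)

lemma opt_le_opt_extendCoin_or (h0 : a 0 = 1) (c : ℕ) :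
    opt a k c ≤ opt (extendCoin a k B) (k + 1) c ∨
      B ≤ c ∧ opt (extendCoin a k B) (k + 1) (c - B) + 1 ≤ opt (extendCoin a k B) (k + 1) c := by
  obtain ⟨u, t, hcount, hsum⟩ := exists_opt_extendCoin (B := B) h0 c
  rcases Nat.eq_zero_or_pos t with rfl | ht
  · left
    rw [← hcount, add_zero]
    exact opt_le_of_sum u (by rwa [zero_mul, add_zero] at hsum)
  · right
    have hB : B ≤ t * B := Nat.le_mul_of_pos_left B ht
    refine ⟨by omega, ?_⟩
    have := opt_extendCoin_le_of_sum (a := a) u (t - 1) (c := c - B)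
      (by rw [Nat.sub_one_mul t B]; omega)
    omega

lemma opt_extendCoin_of_lt (h0 : a 0 = 1) {c : ℕ} (hc : c < B) :
    opt (extendCoin a k B) (k + 1) c = opt a k c := by
  have := opt_le_opt_extendCoin_or (k := k) (B := B) h0 c
  have := opt_extendCoin_le (k := k) (B := B) h0 c
  omega

lemma opt_extendCoin_of_le (h0 : a 0 = 1) {c : ℕ} (hc : B ≤ c) :
    opt (extendCoin a k B) (k + 1) c =
      min (opt a k c) (opt (extendCoin a k B) (k + 1) (c - B) + 1) := by
  obtain ⟨u, t, hcount, hsum⟩ := exists_opt_extendCoin (k := k) (B := B) h0 (c - B)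
  have := opt_extendCoin_le_of_sum (a := a) u (t + 1) (c := c) (by rw [add_one_mul t B]; omega)
  have := opt_le_opt_extendCoin_or (k := k) (B := B) h0 c
  have := opt_extendCoin_le (k := k) (B := B) h0 c
  omega

lemma bestCoin_extendCoin_of_lt {c : ℕ} (hc : c < B) :
    bestCoin (extendCoin a k B) (k + 1) c = bestCoin a k c := by
  have hcoin : ∀ j ∈ Finset.range (k + 1), extendCoin a k B j = a j :=
    fun j hj => extendCoin_of_le (Nat.lt_succ_iff.mp (Finset.mem_range.mp hj))
  unfold bestCoin
  rw [Finset.range_add_one, Finset.filter_insert, if_neg (by rw [extendCoin_add_one]; omega),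
    Finset.filter_congr fun j hj => by rw [hcoin j hj]]
  exact Finset.sup_congr rfl fun j hj => hcoin j (Finset.mem_filter.mp hj).1

lemma grd_extendCoin_of_lt (h0 : a 0 = 1) {c : ℕ} (hc : c < B) :
    grd (extendCoin a k B) (k + 1) c = grd a k c := by
  induction c using Nat.strong_induction_on with
  | _ c ih =>
    rcases Nat.eq_zero_or_pos c with rfl | hpos
    · rw [grd_zero, grd_zero]
    · have h1 := one_le_bestCoin (k := k) h0 hpos
      have hbest := bestCoin_extendCoin_of_lt (a := a) (k := k) hc
      rw [grd_eq_grd_sub_bestCoin_add_one h1, grd_eq_grd_sub_bestCoin_add_one (hbest ▸ h1), hbest,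
        ih _ (by omega) (by omega)]

lemma grd_extendCoin_of_le (hle : ∀ i ≤ k, a i ≤ B) (hB : 1 ≤ B) {c : ℕ} (hc : B ≤ c) :
    grd (extendCoin a k B) (k + 1) c = grd (extendCoin a k B) (k + 1) (c - B) + 1 := by
  have hbest : bestCoin (extendCoin a k B) (k + 1) c = B := by
    have htop : ∀ i ≤ k + 1, extendCoin a k B i ≤ extendCoin a k B (k + 1) := by
      intro i hi
      rcases Nat.lt_or_ge i (k + 1) with hi' | hi'
      · rw [extendCoin_of_le (by omega), extendCoin_add_one]; exact hle i (by omega)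
      · rw [show i = k + 1 by omega]
    simpa only [extendCoin_add_one] using bestCoin_eq_of_le htop (by rwa [extendCoin_add_one])
  rw [grd_eq_grd_sub_bestCoin_add_one (by rw [hbest]; exact hB), hbest]

theorem opt_extendCoin_mul_eq_grd (h0 : a 0 = 1) (hle : ∀ i ≤ k, a i ≤ a k) (hord : Orderly a k)
    {m : ℕ} (hm : 1 ≤ m) (c : ℕ) :
    opt (extendCoin a k (m * a k)) (k + 1) c = grd (extendCoin a k (m * a k)) (k + 1) c := by
  have hk : 1 ≤ a k := h0 ▸ hle 0 k.zero_le
  have hB : 1 ≤ m * a k := Nat.one_le_iff_ne_zero.mpr (by positivity)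
  induction c using Nat.strong_induction_on with
  | _ c ih =>
    rcases Nat.lt_or_ge c (m * a k) with hc | hc
    · rw [opt_extendCoin_of_lt h0 hc, grd_extendCoin_of_lt h0 hc, hord.opt_eq_grd]
    · have hrest := opt_extendCoin_le (k := k) (B := m * a k) h0 (c - m * a k)
      rw [ih _ (by omega), hord.opt_eq_grd] at hrest
      have hgrd := grd_eq_grd_sub_mul_add hle hk m hc
      rw [opt_extendCoin_of_le h0 hc, hord.opt_eq_grd, ih _ (by omega),
        grd_extendCoin_of_le (fun i hi => (hle i hi).trans (Nat.le_mul_of_pos_left _ hm)) hB hc]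
      omega

end extendCoin

/-- An orderly currency extended by any multiple `m * a k` (`m ≥ 2`) of its
highest coin remains orderly. -/
theorem extend_by_multiple_orderly (a : ℕ → ℕ) (k : ℕ)
    (hcur : IsCurrency a k) (hord : Orderly a k)
    (m : ℕ) (hm : 2 ≤ m) :
    Orderly (fun i => if i ≤ k then a i else m * a k) (k + 1) := by
  show Orderly (extendCoin a k (m * a k)) (k + 1)
  have hle : ∀ i ≤ k, a i ≤ a k := fun i hi => hcur.le_of_le hi le_rfl
  exact fun c _ => opt_extendCoin_mul_eq_grd hcur.1 hle hord (by omega) c
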